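/- arXiv:1905.09120 — 5 statements merged into one kernel-verified Lean document; each statement's English description precedes it below -/
import Mathlib

section
/- The TA-SCL Markov chain is irreducible: for every pair of states i, j ∈ {0,1,…,S} there exists an integer k ≥ 1 such that the (i,j) entry of the k-th matrix power P^k is strictly positive. -/
/-- Transition matrix of the TA-SCL Markov chain with parameters `βn`, `βd`
(speed gain `βn/βd`), buffer size `ζ`, and small-decoder block error rate `ε`.
States are `0, 1, …, S` where `S = βn*ζ + βn`. -/
def tasclP (βn βd ζ : ℕ) (ε : ℝ) :
    Matrix (Fin (βn * ζ + βn + 1)) (Fin (βn * ζ + βn + 1)) ℝ :=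
  fun s j =>
    if (s : ℕ) ≤ βd then
      -- idle state: goes to 0 with prob 1-ε, to βn with prob ε
      (if (j : ℕ) = 0 then 1 - ε else 0) + (if (j : ℕ) = βn then ε else 0)
    else if (s : ℕ) ≤ βn * ζ + βd then
      -- safe state: goes to s-βd with prob 1-ε, to s+βn-βd with prob ε
      (if (j : ℕ) = (s : ℕ) - βd then 1 - ε else 0) +
        (if (j : ℕ) = (s : ℕ) + βn - βd then ε else 0)
    else
      -- hazard state: goes to s-βd with prob 1
      if (j : ℕ) = (s : ℕ) - βd then 1 else 0

/-!
Every state drains to `0`: idle states jump there directly, any other state steps down by `βd`.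
Conversely `0` jumps to `βn`, and inside the safe window `(βd, βn ζ + βd]`, of length
`βn ζ ≥ βn`, up-moves `+(βn - βd)` and down-moves `-βd` can be scheduled greedily without ever
leaving the window. As `βn - βd` and `βd` are coprime, a Bézout relation
`βn + A (βn - βd) = j + B βd` in ℕ then leads from `βn` to any safe `j`; idle and hazard states
are one step away from safe ones.
-/

theorem Matrix.isIrreducible_of_forall_transGen {n R : Type*} [Ring R] [LinearOrder R]
    {A : Matrix n n R} (hA : ∀ i j, 0 ≤ A i j)
    (h : ∀ i j, Relation.TransGen (0 < A · ·) i j) : A.IsIrreducible := by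
  let := A.toQuiver
  refine ⟨hA, fun i j => ?_⟩
  induction h i j with
  | single hij => exact ⟨Quiver.Path.nil.cons ⟨hij⟩, by simp⟩
  | tail _ hbc ih =>
    obtain ⟨p, -⟩ := ih
    exact ⟨p.cons ⟨hbc⟩, by simp⟩

theorem Nat.exists_add_mul_eq_add_mul_of_coprime {u d : ℕ} (hu : 0 < u) (hd : 0 < d)
    (hcop : u.Coprime d) (c j : ℕ) : ∃ A B : ℕ, c + A * u = j + B * d := by
  obtain ⟨d', rfl⟩ : ∃ d', d = d' + 1 := ⟨d - 1, by omega⟩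
  obtain ⟨m, -, hm⟩ := Nat.exists_mul_mod_eq_of_coprime (j + c * d') hcop hd.ne'
  -- `u * m ≡ j - c`, and the extra multiple `j * d` of `d` only makes `c + A * u` exceed `j`
  have hmod : c + (m + j * (d' + 1)) * u ≡ j [MOD d' + 1] := by
    rw [← Nat.ModEq, ← ZMod.natCast_eq_natCast_iff] at hm
    rw [← ZMod.natCast_eq_natCast_iff]
    have hd0 : ((d' + 1 : ℕ) : ZMod (d' + 1)) = 0 := ZMod.natCast_self _
    push_cast at hm hd0 ⊢
    linear_combination hm + c * hd0 + j * u * hd0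
  have hle : j ≤ c + (m + j * (d' + 1)) * u := by
    have : j ≤ j * ((d' + 1) * u) := Nat.le_mul_of_pos_right j (by positivity)
    nlinarith
  obtain ⟨B, hB⟩ := (Nat.modEq_iff_dvd' hle).1 hmod.symm
  exact ⟨m + j * (d' + 1), B, by rw [mul_comm B]; omega⟩

namespace TASCL

variable {βn βd ζ : ℕ} {ε : ℝ}

theorem tasclP_nonneg (hε0 : 0 ≤ ε) (hε1 : ε ≤ 1) (i j : Fin (βn * ζ + βn + 1)) :
    0 ≤ tasclP βn βd ζ ε i j := by
  unfold tasclP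
  split_ifs <;> linarith

section positivity

variable {i j : Fin (βn * ζ + βn + 1)}

theorem tasclP_pos_of_idle_of_eq_zero (hε1 : ε < 1) (hi : (i : ℕ) ≤ βd) (hj : (j : ℕ) = 0) :
    0 < tasclP βn βd ζ ε i j := by
  unfold tasclP
  split_ifs <;> first | omega | linarith

theorem tasclP_pos_of_idle_of_eq (hε0 : 0 < ε) (hi : (i : ℕ) ≤ βd) (hj : (j : ℕ) = βn) :
    0 < tasclP βn βd ζ ε i j := by
  unfold tasclP
  split_ifs <;> first | omega | linarith

theorem tasclP_pos_of_eq_sub (hε1 : ε < 1) (hi : βd < i) (hj : (j : ℕ) = i - βd) :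
    0 < tasclP βn βd ζ ε i j := by
  unfold tasclP
  split_ifs <;> first | omega | linarith

theorem tasclP_pos_of_safe_of_eq_add (hε0 : 0 < ε) (hi : βd < i)
    (hi' : (i : ℕ) ≤ βn * ζ + βd)
    (hj : (j : ℕ) = i + βn - βd) : 0 < tasclP βn βd ζ ε i j := by
  unfold tasclP
  split_ifs <;> first | omega | linarith

end positivity

theorem transGen_to_zero (hβd : 0 < βd) (hε1 : ε < 1) (i : Fin (βn * ζ + βn + 1)) :
    Relation.TransGen (0 < tasclP βn βd ζ ε · ·) i 0 := by
  induction i using WellFoundedLT.induction with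
  | _ i ih =>
    by_cases hidle : (i : ℕ) ≤ βd
    · exact .single (tasclP_pos_of_idle_of_eq_zero hε1 hidle (Fin.val_zero _))
    · obtain ⟨t, ht⟩ : ∃ t : Fin (βn * ζ + βn + 1), (t : ℕ) = i - βd := ⟨⟨i - βd, by omega⟩, rfl⟩
      exact .head (tasclP_pos_of_eq_sub hε1 (by omega) ht) (ih t (Fin.lt_def.2 (by omega)))

theorem reflTransGen_of_add_mul_eq (hβ : βd < βn) (hζ : 0 < ζ) (hε0 : 0 < ε) (hε1 : ε < 1)
    {s j : Fin (βn * ζ + βn + 1)} (hs : βd < s) (hs' : (s : ℕ) ≤ βn * ζ + βd)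
    (hj : βd < j) (hj' : (j : ℕ) ≤ βn * ζ + βd) {A B : ℕ}
    (h : s + A * (βn - βd) = j + B * βd) :
    Relation.ReflTransGen (0 < tasclP βn βd ζ ε · ·) s j := by
  have hβn : βn ≤ βn * ζ := Nat.le_mul_of_pos_right βn hζ
  obtain ⟨n, hn⟩ : ∃ n, A + B = n := ⟨_, rfl⟩
  induction n generalizing A B s with
  | zero =>
    obtain ⟨rfl, rfl⟩ : A = 0 ∧ B = 0 := by omega
    obtain rfl : s = j := Fin.ext (by omega)
    exact .refl
  | succ n ih =>
    -- sign information on the product, which `omega` only sees as an atom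
    have hAu : A = 0 ∧ A * (βn - βd) = 0 ∨ 0 < A ∧ βn - βd ≤ A * (βn - βd) := by
      rcases A.eq_zero_or_pos with rfl | hA
      exacts [.inl ⟨rfl, zero_mul _⟩, .inr ⟨hA, Nat.le_mul_of_pos_left _ hA⟩]
    by_cases hup : 0 < A ∧ (s : ℕ) + βn - βd ≤ βn * ζ + βd
    · obtain ⟨A, rfl⟩ : ∃ A', A = A' + 1 := ⟨A - 1, by omega⟩
      rw [add_one_mul] at h
      obtain ⟨t, ht⟩ : ∃ t : Fin (βn * ζ + βn + 1), (t : ℕ) = s + βn - βd :=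
        ⟨⟨s + βn - βd, by omega⟩, rfl⟩
      exact .head (tasclP_pos_of_safe_of_eq_add hε0 hs hs' ht)
        (ih (s := t) (A := A) (B := B) (by omega) (by omega) (by omega) (by omega))
    -- no usable up-move: then a down-move is pending, and it stays in the window
    · obtain ⟨B, rfl⟩ : ∃ B', B = B' + 1 := by
        rcases B with _ | B
        · rw [zero_mul] at h
          omega
        · exact ⟨B, rfl⟩
      rw [add_one_mul] at h
      obtain ⟨t, ht⟩ : ∃ t : Fin (βn * ζ + βn + 1), (t : ℕ) = s - βd := ⟨⟨s - βd, by omega⟩, rfl⟩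
      exact .head (tasclP_pos_of_eq_sub hε1 hs ht)
        (ih (s := t) (A := A) (B := B) (by omega) (by omega) (by omega) (by omega))

theorem reflTransGen_from_zero_of_safe (hβd : 0 < βd) (hβ : βd < βn) (hcop : βn.Coprime βd)
    (hζ : 0 < ζ) (hε0 : 0 < ε) (hε1 : ε < 1) (j : Fin (βn * ζ + βn + 1)) (hj : βd < j)
    (hj' : (j : ℕ) ≤ βn * ζ + βd) :
    Relation.ReflTransGen (0 < tasclP βn βd ζ ε · ·) 0 j := by
  have hβn : βn ≤ βn * ζ := Nat.le_mul_of_pos_right βn hζ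
  obtain ⟨A, B, hAB⟩ := Nat.exists_add_mul_eq_add_mul_of_coprime (by omega) hβd
    ((Nat.coprime_sub_self_left hβ.le).2 hcop) βn j
  obtain ⟨t, ht⟩ : ∃ t : Fin (βn * ζ + βn + 1), (t : ℕ) = βn := ⟨⟨βn, by omega⟩, rfl⟩
  exact .head (tasclP_pos_of_idle_of_eq hε0 (by simp) ht)
    (reflTransGen_of_add_mul_eq (s := t) hβ hζ hε0 hε1 (by omega) (by omega) hj hj' (by rwa [ht]))

theorem reflTransGen_from_zero (hβd : 0 < βd) (hβ : βd < βn) (hcop : βn.Coprime βd)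
    (hζ : 0 < ζ) (hε0 : 0 < ε) (hε1 : ε < 1) (j : Fin (βn * ζ + βn + 1)) :
    Relation.ReflTransGen (0 < tasclP βn βd ζ ε · ·) 0 j := by
  have hβn : βn ≤ βn * ζ := Nat.le_mul_of_pos_right βn hζ
  have safe := reflTransGen_from_zero_of_safe (ε := ε) hβd hβ hcop hζ hε0 hε1
  rcases Nat.eq_zero_or_pos (j : ℕ) with hj0 | hj0
  · obtain rfl : j = 0 := Fin.ext hj0
    exact .refl
  by_cases hidle : (j : ℕ) ≤ βd
  · obtain ⟨t, ht⟩ : ∃ t : Fin (βn * ζ + βn + 1), (t : ℕ) = j + βd := ⟨⟨j + βd, by omega⟩, rfl⟩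
    exact .tail (safe t (by omega) (by omega))
      (tasclP_pos_of_eq_sub (i := t) hε1 (by omega) (by omega))
  by_cases hsafe : (j : ℕ) ≤ βn * ζ + βd
  · exact safe j (by omega) hsafe
  · obtain ⟨t, ht⟩ : ∃ t : Fin (βn * ζ + βn + 1), (t : ℕ) = j + βd - βn :=
      ⟨⟨j + βd - βn, by omega⟩, rfl⟩
    exact .tail (safe t (by omega) (by omega))
      (tasclP_pos_of_safe_of_eq_add (i := t) hε0 (by omega) (by omega) (by omega))

theorem isIrreducible_tasclP (hβd : 0 < βd) (hβ : βd < βn) (hcop : βn.Coprime βd)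
    (hζ : 0 < ζ) (hε0 : 0 < ε) (hε1 : ε < 1) : (tasclP βn βd ζ ε).IsIrreducible :=
  Matrix.isIrreducible_of_forall_transGen (tasclP_nonneg hε0.le hε1.le) fun i j =>
    (transGen_to_zero hβd hε1 i).trans_left (reflTransGen_from_zero hβd hβ hcop hζ hε0 hε1 j)

end TASCL

/-- The TA-SCL Markov chain is irreducible: for every pair of states `i, j`
there exists `k ≥ 1` with `(P^k) i j > 0`. -/
theorem tascl_irreducible (βn βd ζ : ℕ) (hβd : 0 < βd) (hβ : βd < βn)
    (hcop : Nat.Coprime βn βd) (hζ : 0 < ζ) (ε : ℝ) (hε0 : 0 < ε) (hε1 : ε < 1) :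
    ∀ i j : Fin (βn * ζ + βn + 1),
      ∃ k : ℕ, 1 ≤ k ∧ 0 < (tasclP βn βd ζ ε ^ k) i j :=
  (Matrix.isIrreducible_iff_exists_pow_pos (TASCL.tasclP_nonneg hε0.le hε1.le)).1
    (TASCL.isIrreducible_tasclP hβd hβ hcop hζ hε0 hε1)
end

section
/- The TA-SCL Markov chain is aperiodic: for every state i ∈ {0,1,…,S}, the greatest common divisor of the set {k ≥ 1 : the (i,i) entry of P^k is strictly positive} equals 1. -/
/-!
State `0` carries a self-loop, so it suffices that the chain is irreducible: the return times
`a + b + 1` and `a + b + 2` of a loop through `0` are then coprime. Every state walks down to `0`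
in steps of `-βd`. Conversely, from `0` the chain jumps to `βn` and climbs above `βn * ζ`; from
there, descending into the window `(βn * ζ, βn * ζ + βd]` and taking one up-step `+(βn - βd)`
shifts the residue mod `βd` by `βn`. As `βn` is a unit mod `βd`, every residue is reached among the
top `βd` states, and any state descends from the top state of its residue.
-/

open Relation

namespace Matrix

variable {n R : Type*} [Fintype n] [DecidableEq n] [Semiring R] [PartialOrder R]
  [IsStrictOrderedRing R]

def IsAperiodicAt (A : Matrix n n R) (i : n) : Prop :=
  (∃ k : ℕ, 1 ≤ k ∧ 0 < (A ^ k) i i) ∧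
    ∀ d : ℕ, (∀ k : ℕ, 1 ≤ k → 0 < (A ^ k) i i → d ∣ k) → d = 1

variable {A : Matrix n n R}

lemma pow_add_apply_pos (hA : ∀ i j, 0 ≤ A i j) {a b : ℕ} {i k j : n}
    (h₁ : 0 < (A ^ a) i k) (h₂ : 0 < (A ^ b) k j) : 0 < (A ^ (a + b)) i j := by
  rw [pow_add, mul_apply]
  exact Finset.sum_pos'
    (fun l _ => mul_nonneg (pow_apply_nonneg hA a i l) (pow_apply_nonneg hA b l j))
    ⟨k, Finset.mem_univ k, mul_pos h₁ h₂⟩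

lemma exists_pow_apply_pos_of_reflTransGen (hA : ∀ i j, 0 ≤ A i j) {i j : n}
    (h : ReflTransGen (fun i j => 0 < A i j) i j) : ∃ k : ℕ, 0 < (A ^ k) i j := by
  induction h with
  | refl => exact ⟨0, by simp⟩
  | tail _ hlast ih =>
    obtain ⟨k, hk⟩ := ih
    exact ⟨k + 1, pow_add_apply_pos hA hk (by rwa [pow_one])⟩

theorem isAperiodicAt_of_apply_self_pos (hA : ∀ i j, 0 ≤ A i j) {i z : n} (hz : 0 < A z z)
    (hiz : ReflTransGen (fun i j => 0 < A i j) i z)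
    (hzi : ReflTransGen (fun i j => 0 < A i j) z i) : A.IsAperiodicAt i := by
  obtain ⟨a, ha⟩ := exists_pow_apply_pos_of_reflTransGen hA hiz
  obtain ⟨b, hb⟩ := exists_pow_apply_pos_of_reflTransGen hA hzi
  have hloop : 0 < (A ^ 1) z z := by rwa [pow_one]
  have h₁ : 0 < (A ^ (a + 1 + b)) i i := pow_add_apply_pos hA (pow_add_apply_pos hA ha hloop) hb
  have h₂ : 0 < (A ^ (a + 1 + 1 + b)) i i :=
    pow_add_apply_pos hA (pow_add_apply_pos hA (pow_add_apply_pos hA ha hloop) hloop) hb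
  refine ⟨⟨_, by omega, h₁⟩, fun d hd => Nat.dvd_one.mp ?_⟩
  have := Nat.dvd_sub (hd _ (by omega) h₂) (hd _ (by omega) h₁)
  rwa [show a + 1 + 1 + b - (a + 1 + b) = 1 by omega] at this

end Matrix

theorem Nat.exists_add_mul_modEq_of_coprime {a n : ℕ} (hn : 0 < n) (h : a.Coprime n)
    (b c : ℕ) : ∃ k : ℕ, b + k * a ≡ c [MOD n] := by
  have : NeZero n := ⟨hn.ne'⟩
  refine ⟨(((c : ZMod n) - b) * (a : ZMod n)⁻¹).val, ?_⟩
  rw [← ZMod.natCast_eq_natCast_iff]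
  push_cast
  rw [ZMod.natCast_zmod_val, mul_assoc, mul_comm _ (a : ZMod n), ZMod.coe_mul_inv_eq_one a h]
  ring

section TASCL

variable {βn βd ζ : ℕ} {ε : ℝ}

local notation "N" => βn * ζ + βn + 1

local notation s " ↝ " t => ReflTransGen (fun a b => 0 < tasclP βn βd ζ ε a b) s t

lemma tasclP_nonneg (hε0 : 0 ≤ ε) (hε1 : ε ≤ 1) (s t : Fin N) : 0 ≤ tasclP βn βd ζ ε s t := by
  unfold tasclP
  split_ifs <;> linarith

lemma tasclP_pos_of_le_of_eq_zero (hε1 : ε < 1) {s t : Fin N}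
    (hs : (s : ℕ) ≤ βd) (ht : (t : ℕ) = 0) : 0 < tasclP βn βd ζ ε s t := by
  unfold tasclP
  split_ifs <;> first | omega | linarith

lemma tasclP_pos_of_le_of_eq (hε0 : 0 < ε) {s t : Fin N}
    (hs : (s : ℕ) ≤ βd) (ht : (t : ℕ) = βn) : 0 < tasclP βn βd ζ ε s t := by
  unfold tasclP
  split_ifs <;> first | omega | linarith

lemma tasclP_pos_of_add_eq (hε1 : ε < 1) {s t : Fin N}
    (hs : βd < (s : ℕ)) (ht : (t : ℕ) + βd = s) : 0 < tasclP βn βd ζ ε s t := by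
  unfold tasclP
  split_ifs <;> first | omega | linarith

lemma tasclP_pos_of_add_eq_add (hε0 : 0 < ε) {s t : Fin N}
    (hs : βd < (s : ℕ)) (hs' : (s : ℕ) ≤ βn * ζ + βd) (ht : (t : ℕ) + βd = s + βn) :
    0 < tasclP βn βd ζ ε s t := by
  unfold tasclP
  split_ifs <;> first | omega | linarith

lemma tasclP_reflTransGen_of_eq_add_mul (hε1 : ε < 1) {t : Fin N} (ht : 1 ≤ (t : ℕ)) (j : ℕ) :
    ∀ s : Fin N, (s : ℕ) = t + βd * j → s ↝ t := by
  induction j with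
  | zero =>
    intro s hs
    obtain rfl : s = t := Fin.ext (by simpa using hs)
    exact .refl
  | succ j ih =>
    intro s hs
    rw [Nat.mul_succ] at hs
    have hs' : (t : ℕ) + βd * j < N := by omega
    exact .head (tasclP_pos_of_add_eq hε1 (t := ⟨_, hs'⟩) (by omega) (by dsimp only; omega))
      (ih _ rfl)

lemma tasclP_reflTransGen_of_modEq (hε1 : ε < 1) {s t : Fin N} (ht : 1 ≤ (t : ℕ))
    (hts : (t : ℕ) < s + βd) (hmod : (t : ℕ) ≡ s [MOD βd]) : s ↝ t := by
  have hle : (t : ℕ) ≤ s := by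
    by_contra! hlt
    have := Nat.le_of_dvd (by omega) ((Nat.modEq_iff_dvd' hlt.le).mp hmod.symm)
    omega
  obtain ⟨j, hj⟩ := (Nat.modEq_iff_dvd' hle).mp hmod
  exact tasclP_reflTransGen_of_eq_add_mul hε1 ht j s (by omega)

lemma tasclP_reflTransGen_zero_right (hβd : 0 < βd) (hε1 : ε < 1) (s : Fin N) : s ↝ 0 := by
  induction hs : (s : ℕ) using Nat.strong_induction_on generalizing s with
  | _ m ih =>
    by_cases hidle : (s : ℕ) ≤ βd
    · exact .single (tasclP_pos_of_le_of_eq_zero hε1 hidle rfl)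
    · have hs' : (s : ℕ) - βd < N := by omega
      exact .head (tasclP_pos_of_add_eq hε1 (t := ⟨_, hs'⟩) (by omega) (by dsimp only; omega))
        (ih ((s : ℕ) - βd) (by omega) _ rfl)

lemma tasclP_exists_reflTransGen_gt (hβ : βd < βn) (hε0 : 0 < ε) {s : Fin N}
    (hs : βd < (s : ℕ)) : ∃ q : Fin N, βn * ζ < q ∧ s ↝ q := by
  induction hm : βn * ζ + 1 - s using Nat.strong_induction_on generalizing s with
  | _ m ih =>
    by_cases hhigh : βn * ζ < s
    · exact ⟨s, hhigh, .refl⟩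
    · have hs' : (s : ℕ) + βn - βd < N := by omega
      obtain ⟨q, hq, hreach⟩ := ih (βn * ζ + 1 - ((s : ℕ) + βn - βd)) (by omega)
        (s := ⟨_, hs'⟩) (by dsimp only; omega) rfl
      exact ⟨q, hq,
        .head (tasclP_pos_of_add_eq_add hε0 hs (by omega) (by dsimp only; omega)) hreach⟩

lemma tasclP_exists_reflTransGen_modEq_add (hβd : 0 < βd) (hβ : βd < βn) (hζ : 0 < ζ)
    (hε0 : 0 < ε) (hε1 : ε < 1) (q : Fin N) (hq : βn * ζ < q) :
    ∃ w : Fin N, βn * ζ + βn < w + βd ∧ (w : ℕ) ≡ q + βn [MOD βd] ∧ q ↝ w := by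
  have hβζ : βn ≤ βn * ζ := Nat.le_mul_of_pos_right βn hζ
  set r := ((q : ℕ) - βn * ζ - 1) % βd
  have hr : r < βd := Nat.mod_lt _ hβd
  have hrq : r ≤ (q : ℕ) - βn * ζ - 1 := Nat.mod_le _ _
  have hu : βn * ζ + 1 + r < N := by omega
  have hw : βn * ζ + 1 + r + βn - βd < N := by omega
  have hmod : βn * ζ + 1 + r ≡ q [MOD βd] := by
    have := (Nat.mod_modEq ((q : ℕ) - βn * ζ - 1) βd).add_left (βn * ζ + 1)
    rwa [show βn * ζ + 1 + ((q : ℕ) - βn * ζ - 1) = q by omega] at this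
  -- `βn * ζ + 1 + r` is the representative of `q` in the window `(βn * ζ, βn * ζ + βd]`,
  -- from which one up-step lands in the top `βd` states.
  refine ⟨⟨_, hw⟩, by dsimp only; omega, ?_, ?_⟩
  · calc βn * ζ + 1 + r + βn - βd ≡ βn * ζ + 1 + r + βn - βd + βd [MOD βd] :=
          Nat.add_modEq_right.symm
      _ = βn * ζ + 1 + r + βn := by omega
      _ ≡ q + βn [MOD βd] := hmod.add_right βn
  · have hqu : q ↝ ⟨_, hu⟩ :=
      tasclP_reflTransGen_of_modEq hε1 (by dsimp only; omega) (by dsimp only; omega) hmod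
    exact hqu.tail <| tasclP_pos_of_add_eq_add hε0
      (by dsimp only; omega) (by dsimp only; omega) (by dsimp only; omega)

lemma tasclP_reflTransGen_zero_left (hβd : 0 < βd) (hβ : βd < βn) (hcop : βn.Coprime βd)
    (hζ : 0 < ζ) (hε0 : 0 < ε) (hε1 : ε < 1) (t : Fin N) : 0 ↝ t := by
  rcases Nat.eq_zero_or_pos (t : ℕ) with ht | ht
  · obtain rfl : t = 0 := Fin.ext ht
    exact .refl
  have shift := tasclP_exists_reflTransGen_modEq_add hβd hβ hζ hε0 hε1
  obtain ⟨q, hq, hβq⟩ :=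
    tasclP_exists_reflTransGen_gt hβ hε0 (s := ⟨βn, by omega⟩) (by dsimp only; omega)
  have h0q : 0 ↝ q := .head (tasclP_pos_of_le_of_eq hε0 (by simp) rfl) hβq
  have orbit (k : ℕ) : ∃ w : Fin N, βn * ζ < w ∧ (w : ℕ) ≡ q + k * βn [MOD βd] ∧ 0 ↝ w := by
    induction k with
    | zero => exact ⟨q, hq, by simp [Nat.ModEq.refl], h0q⟩
    | succ k ih =>
      obtain ⟨w, hw, hwq, h0w⟩ := ih
      obtain ⟨w', hw', hw'w, hww'⟩ := shift w hw
      refine ⟨w', by omega, hw'w.trans ?_, h0w.trans hww'⟩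
      rw [Nat.succ_mul, ← add_assoc]
      exact hwq.add_right βn
  obtain ⟨k, hk⟩ := Nat.exists_add_mul_modEq_of_coprime hβd hcop (q + βn) t
  obtain ⟨w, hw, hwq, h0w⟩ := orbit k
  obtain ⟨w', hw', hw'w, hww'⟩ := shift w hw
  have hw't : (w' : ℕ) ≡ t [MOD βd] := by
    refine (hw'w.trans (hwq.add_right βn)).trans ?_
    rwa [add_right_comm]
  exact h0w.trans (hww'.trans (tasclP_reflTransGen_of_modEq hε1 ht (by omega) hw't.symm))

end TASCL

/-- The TA-SCL Markov chain is aperiodic: for every state `i`, the set of return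
times `{k ≥ 1 : (P^k) i i > 0}` is nonempty and its greatest common divisor is `1`,
i.e. every common divisor of the set equals `1`. -/
theorem tascl_aperiodic (βn βd ζ : ℕ) (hβd : 0 < βd) (hβ : βd < βn)
    (hcop : Nat.Coprime βn βd) (hζ : 0 < ζ) (ε : ℝ) (hε0 : 0 < ε) (hε1 : ε < 1) :
    ∀ i : Fin (βn * ζ + βn + 1),
      (∃ k : ℕ, 1 ≤ k ∧ 0 < (tasclP βn βd ζ ε ^ k) i i) ∧
      (∀ d : ℕ, (∀ k : ℕ, 1 ≤ k → 0 < (tasclP βn βd ζ ε ^ k) i i → d ∣ k) → d = 1) := fun i =>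
  Matrix.isAperiodicAt_of_apply_self_pos (tasclP_nonneg hε0.le hε1.le)
    (tasclP_pos_of_le_of_eq_zero hε1 (Nat.zero_le βd) rfl)
    (tasclP_reflTransGen_zero_right hβd hε1 i)
    (tasclP_reflTransGen_zero_left hβd hβ hcop hζ hε0 hε1 i)
end

section
/- The TA-SCL transition matrix is primitive: there exists an integer m ≥ 1 such that every entry of the matrix power P^m is strictly positive. -/
namespace TasclAux

variable {βn βd ζ : ℕ} {ε : ℝ}

lemma P_nonneg (hε0 : 0 < ε) (hε1 : ε < 1) (i j : Fin (βn*ζ+βn+1)) :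
    0 ≤ tasclP βn βd ζ ε i j := by
  unfold tasclP
  split_ifs <;> norm_num <;> linarith

lemma pow_nonneg (hε0 : 0 < ε) (hε1 : ε < 1) (m : ℕ) (i j : Fin (βn*ζ+βn+1)) :
    0 ≤ (tasclP βn βd ζ ε ^ m) i j := by
  induction m generalizing i j with
  | zero => rw [pow_zero, Matrix.one_apply]; split_ifs <;> norm_num
  | succ n ih =>
    rw [pow_succ, Matrix.mul_apply]
    exact Finset.sum_nonneg fun k _ => mul_nonneg (ih i k) (P_nonneg hε0 hε1 k j)

lemma chain (hε0 : 0 < ε) (hε1 : ε < 1) {a b : ℕ} {i k j : Fin (βn*ζ+βn+1)}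
    (h1 : 0 < (tasclP βn βd ζ ε ^ a) i k) (h2 : 0 < (tasclP βn βd ζ ε ^ b) k j) :
    0 < (tasclP βn βd ζ ε ^ (a+b)) i j := by
  rw [pow_add, Matrix.mul_apply]
  refine lt_of_lt_of_le (mul_pos h1 h2) ?_
  exact Finset.single_le_sum
    (f := fun x => (tasclP βn βd ζ ε ^ a) i x * (tasclP βn βd ζ ε ^ b) x j)
    (fun x _ => mul_nonneg (pow_nonneg hε0 hε1 a i x) (pow_nonneg hε0 hε1 b x j))
    (Finset.mem_univ k)

lemma chain1 (hε0 : 0 < ε) (hε1 : ε < 1) {a : ℕ} {i k j : Fin (βn*ζ+βn+1)}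
    (h1 : 0 < (tasclP βn βd ζ ε ^ a) i k) (h2 : 0 < tasclP βn βd ζ ε k j) :
    0 < (tasclP βn βd ζ ε ^ (a+1)) i j := by
  refine chain hε0 hε1 h1 ?_
  rw [pow_one]; exact h2

lemma P_pos_zero (hβ : βd < βn) (hε1 : ε < 1) {s j : Fin (βn*ζ+βn+1)}
    (hs : (s : ℕ) ≤ βd) (hj : (j : ℕ) = 0) : 0 < tasclP βn βd ζ ε s j := by
  unfold tasclP
  rw [if_pos hs, if_pos hj, if_neg (by omega)]
  linarith

lemma P_pos_up_idle (hβ : βd < βn) (hε0 : 0 < ε) {s j : Fin (βn*ζ+βn+1)}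
    (hs : (s : ℕ) ≤ βd) (hj : (j : ℕ) = βn) : 0 < tasclP βn βd ζ ε s j := by
  unfold tasclP
  rw [if_pos hs, if_pos hj, if_neg (by omega)]
  linarith

lemma P_pos_down (hβ : βd < βn) (hε1 : ε < 1) {s j : Fin (βn*ζ+βn+1)}
    (hs : βd < (s : ℕ)) (hj : (j : ℕ) = (s : ℕ) - βd) : 0 < tasclP βn βd ζ ε s j := by
  unfold tasclP
  rw [if_neg (by omega)]
  by_cases h2 : (s : ℕ) ≤ βn*ζ+βd
  · rw [if_pos h2, if_pos hj, if_neg (by omega)]; linarith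
  · rw [if_neg h2, if_pos hj]; norm_num

lemma P_pos_up_safe (hβ : βd < βn) (hε0 : 0 < ε) {s j : Fin (βn*ζ+βn+1)}
    (hs1 : βd < (s : ℕ)) (hs2 : (s : ℕ) ≤ βn*ζ+βd) (hj : (j : ℕ) = (s : ℕ) + βn - βd) :
    0 < tasclP βn βd ζ ε s j := by
  unfold tasclP
  rw [if_neg (by omega), if_pos hs2, if_neg (by omega), if_pos hj]
  linarith

/-- `x` is reachable from state `0` in some number of steps. -/
def Reach (βn βd ζ : ℕ) (ε : ℝ) (x : ℕ) : Prop :=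
  ∃ (h : x < βn*ζ+βn+1) (k : ℕ),
    0 < (tasclP βn βd ζ ε ^ k) ⟨0, Nat.succ_pos _⟩ ⟨x, h⟩

lemma reach_zero : Reach βn βd ζ ε 0 := by
  refine ⟨Nat.succ_pos _, 0, ?_⟩
  rw [pow_zero, Matrix.one_apply_eq]
  norm_num

lemma Reach.congr {x y : ℕ} (h : Reach βn βd ζ ε x) (e : x = y) : Reach βn βd ζ ε y := e ▸ h

lemma Reach.up_idle (hβ : βd < βn) (hε0 : 0 < ε) (hε1 : ε < 1) {x : ℕ}
    (hx : Reach βn βd ζ ε x) (h1 : x ≤ βd) : Reach βn βd ζ ε βn := by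
  obtain ⟨hlt, k, hk⟩ := hx
  have hb : βn < βn*ζ+βn+1 := by omega
  refine ⟨hb, k+1, ?_⟩
  exact chain1 hε0 hε1 hk (P_pos_up_idle hβ hε0 (s := ⟨x, hlt⟩) (j := ⟨βn, hb⟩) h1 rfl)

lemma Reach.up_safe (hβ : βd < βn) (hε0 : 0 < ε) (hε1 : ε < 1) {x : ℕ}
    (hx : Reach βn βd ζ ε x) (h1 : βd < x) (h2 : x ≤ βn*ζ+βd) :
    Reach βn βd ζ ε (x - βd + βn) := by
  obtain ⟨hlt, k, hk⟩ := hx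
  have hb : x - βd + βn < βn*ζ+βn+1 := by omega
  refine ⟨hb, k+1, ?_⟩
  exact chain1 hε0 hε1 hk (P_pos_up_safe hβ hε0 (s := ⟨x, hlt⟩) (j := ⟨x - βd + βn, hb⟩)
    h1 h2 (by show x - βd + βn = x + βn - βd; omega))

lemma Reach.down (hβ : βd < βn) (hε0 : 0 < ε) (hε1 : ε < 1) {x : ℕ}
    (hx : Reach βn βd ζ ε x) (h1 : βd < x) : Reach βn βd ζ ε (x - βd) := by
  obtain ⟨hlt, k, hk⟩ := hx
  have hb : x - βd < βn*ζ+βn+1 := by omega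
  exact ⟨hb, k+1, chain1 hε0 hε1 hk (P_pos_down hβ hε1 (s := ⟨x, hlt⟩) (j := ⟨x - βd, hb⟩) h1 rfl)⟩


section
variable (hβd : 0 < βd) (hβ : βd < βn) (hζ : 0 < ζ) (hε0 : 0 < ε) (hε1 : ε < 1)
include hβd hβ hζ hε0 hε1

/-- from any reachable point above the buffer-full line, we can come down into
the window `(βn*ζ, βn*ζ+βd]`. -/
lemma reach_window :
    ∀ x, Reach βn βd ζ ε x → βn*ζ < x → x ≤ βn*ζ+βn →
    ∃ y c, Reach βn βd ζ ε y ∧ βn*ζ < y ∧ y ≤ βn*ζ+βd ∧ x = y + c*βd := by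
  have hNN : βn ≤ βn*ζ := Nat.le_mul_of_pos_right βn hζ
  intro x
  induction x using Nat.strong_induction_on with
  | _ x ih =>
    intro hx h1 h2
    by_cases h3 : x ≤ βn*ζ+βd
    · exact ⟨x, 0, hx, h1, h3, by omega⟩
    · obtain ⟨y, c, hy, hy1, hy2, hy3⟩ :=
        ih (x - βd) (by omega) (hx.down hβ hε0 hε1 (by omega)) (by omega) (by omega)
      have : (c+1)*βd = c*βd + βd := by ring
      exact ⟨y, c+1, hy, hy1, hy2, by omega⟩

lemma reach_down_to :
    ∀ t, Reach βn βd ζ ε t → ∀ j c, 1 ≤ j → t = j + c*βd → Reach βn βd ζ ε j := by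
  intro t
  induction t using Nat.strong_induction_on with
  | _ t ih =>
    intro ht j c hj he
    match c with
    | 0 => exact ht.congr (by omega)
    | c+1 =>
      have h1 : βd < t := by
        have : (c+1)*βd = c*βd + βd := by ring
        omega
      have h2 : t - βd = j + c*βd := by
        have : (c+1)*βd = c*βd + βd := by ring
        omega
      exact ih (t - βd) (by omega) (ht.down hβ hε0 hε1 h1) j c hj h2

/-- from any reachable point above `βn*ζ`, we can reach a point in the top
window `(βn*ζ+βn-βd, βn*ζ+βn]` whose value is `t + βn` minus a multiple of `βd`. -/
lemma top_step {t : ℕ} (ht : Reach βn βd ζ ε t) (h1 : βn*ζ < t) (h2 : t ≤ βn*ζ+βn) :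
    ∃ t' c, Reach βn βd ζ ε t' ∧ βn*ζ+βn-βd < t' ∧ t' ≤ βn*ζ+βn ∧ t + βn = t' + c*βd := by
  have hNN : βn ≤ βn*ζ := Nat.le_mul_of_pos_right βn hζ
  obtain ⟨y, c, hy, hy1, hy2, hy3⟩ := reach_window hβd hβ hζ hε0 hε1 t ht h1 h2
  refine ⟨y - βd + βn, c+1, hy.up_safe hβ hε0 hε1 (by omega) hy2, by omega, by omega, ?_⟩
  have : (c+1)*βd = c*βd + βd := by ring
  omega

/-- some state strictly above `βn*ζ` (and `≤ βn*ζ+βn`) is reachable. -/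
lemma reach_high : ∃ t, Reach βn βd ζ ε t ∧ βn*ζ < t ∧ t ≤ βn*ζ+βn := by
  have hNN : βn ≤ βn*ζ := Nat.le_mul_of_pos_right βn hζ
  set d := βn - βd with hdd
  have hd0 : 0 < d := by omega
  have key : ∀ i, i*d ≤ βn*ζ → Reach βn βd ζ ε (i*d + βn) := by
    intro i
    induction i with
    | zero =>
      intro _
      exact (reach_zero.up_idle hβ hε0 hε1 (Nat.zero_le βd)).congr (by omega)
    | succ i ih =>
      intro h
      have hmul : (i+1)*d = i*d + d := by ring
      have h1 : i*d ≤ βn*ζ := by omega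
      have h2 : Reach βn βd ζ ε (i*d + βn) := ih h1
      have h3 : βd < i*d + βn := by omega
      have h4 : i*d + βn ≤ βn*ζ + βd := by omega
      exact (h2.up_safe hβ hε0 hε1 h3 h4).congr (by omega)
  set q := βn*ζ / d with hq
  have hq1 : q*d ≤ βn*ζ := Nat.div_mul_le_self (βn*ζ) d
  have hq2 : βn*ζ < q*d + d := by
    have h1 := Nat.div_add_mod (βn*ζ) d
    have h2 := Nat.mod_lt (βn*ζ) hd0
    have h3 : d*(βn*ζ/d) = q*d := by rw [hq]; ring
    omega
  exact ⟨q*d + βn, key q hq1, by omega, by omega⟩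

lemma top_cover :
    ∃ t0 ≤ βn*ζ+βn, ∀ a, ∃ t c, Reach βn βd ζ ε t ∧ βn*ζ+βn-βd < t ∧
      t ≤ βn*ζ+βn ∧ t0 + a*βn = t + c*βd := by
  have hNN : βn ≤ βn*ζ := Nat.le_mul_of_pos_right βn hζ
  obtain ⟨s, hs, hs1, hs2⟩ := reach_high hβd hβ hζ hε0 hε1
  obtain ⟨t0, c0, ht0, ht01, ht02, ht03⟩ := top_step hβd hβ hζ hε0 hε1 hs hs1 hs2
  refine ⟨t0, ht02, fun a => ?_⟩
  induction a with
  | zero => exact ⟨t0, 0, ht0, ht01, ht02, by omega⟩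
  | succ a ih =>
    obtain ⟨t, c, ht, h1, h2, h3⟩ := ih
    obtain ⟨t', c', ht', h1', h2', h3'⟩ :=
      top_step hβd hβ hζ hε0 hε1 ht (by omega) h2
    refine ⟨t', c + c', ht', h1', h2', ?_⟩
    have e1 : (a+1)*βn = a*βn + βn := by ring
    have e2 : (c+c')*βd = c*βd + c'*βd := by ring
    omega

end

lemma exists_mul_mod (hcop : Nat.Coprime βn βd) (hβd : 0 < βd) (t0 j : ℕ) :
    ∃ a : ℕ, (t0 + a * βn) % βd = j % βd := by
  haveI : NeZero βd := ⟨hβd.ne'⟩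
  set u : (ZMod βd)ˣ := ZMod.unitOfCoprime βn hcop with hu
  obtain ⟨a, ha⟩ : ∃ a : ℕ, (a * βn : ZMod βd) = (j : ZMod βd) - t0 := by
    refine ⟨((((j : ZMod βd) - t0) * ((u⁻¹ : (ZMod βd)ˣ) : ZMod βd))).val, ?_⟩
    rw [ZMod.natCast_val, ZMod.cast_id]
    have hcoe : ((u : (ZMod βd)ˣ) : ZMod βd) = (βn : ZMod βd) := ZMod.coe_unitOfCoprime βn hcop
    rw [← hcoe, mul_assoc, Units.inv_mul, mul_one]
  have h2 : ((t0 + a * βn : ℕ) : ZMod βd) = ((j : ℕ) : ZMod βd) := by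
    push_cast
    rw [ha]; ring
  exact ⟨a, (ZMod.natCast_eq_natCast_iff _ _ _).mp h2⟩

section
variable (hβd : 0 < βd) (hβ : βd < βn) (hcop : Nat.Coprime βn βd) (hζ : 0 < ζ)
  (hε0 : 0 < ε) (hε1 : ε < 1)
include hβd hβ hcop hζ hε0 hε1

lemma reach_all : ∀ j ≤ βn*ζ+βn, Reach βn βd ζ ε j := by
  have hNN : βn ≤ βn*ζ := Nat.le_mul_of_pos_right βn hζ
  obtain ⟨t0, ht0le, htop⟩ := top_cover hβd hβ hζ hε0 hε1
  intro j hj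
  rcases Nat.eq_zero_or_pos j with h0 | h0
  · exact reach_zero.congr h0.symm
  obtain ⟨a, ha⟩ := exists_mul_mod hcop hβd t0 j
  obtain ⟨t, c, ht, h1, h2, h3⟩ := htop a
  have hsub : βn*ζ+βn-βd + βd = βn*ζ+βn := Nat.sub_add_cancel (by omega)
  -- t ≡ j (mod βd)
  have hmod : t % βd = j % βd := by
    rw [h3, Nat.add_mul_mod_self_right] at ha
    exact ha
  -- j ≤ t
  have hjt : j ≤ t := by
    by_contra hlt
    push_neg at hlt
    have hdvd : βd ∣ j - t := (Nat.modEq_iff_dvd' (le_of_lt hlt)).mp hmod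
    have := Nat.le_of_dvd (by omega) hdvd
    omega
  obtain ⟨c2, hc2⟩ : βd ∣ t - j := (Nat.modEq_iff_dvd' hjt).mp hmod.symm
  refine reach_down_to hβd hβ hζ hε0 hε1 t ht j c2 h0 ?_
  have : c2 * βd = βd * c2 := by ring
  omega

lemma reach_to_zero :
    ∀ (n : ℕ) (s : Fin (βn*ζ+βn+1)), (s : ℕ) ≤ n →
      0 < (tasclP βn βd ζ ε ^ (n+1)) s ⟨0, Nat.succ_pos _⟩ := by
  intro n
  induction n with
  | zero =>
    intro s hs
    rw [pow_one]
    exact P_pos_zero hβ hε1 (by omega) rfl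
  | succ n ih =>
    intro s hs
    by_cases h : (s : ℕ) ≤ βd
    · have hstep : 0 < tasclP βn βd ζ ε s ⟨0, Nat.succ_pos _⟩ := P_pos_zero hβ hε1 h rfl
      have hrest := ih ⟨0, Nat.succ_pos _⟩ (Nat.zero_le n)
      have := chain hε0 hε1 ((pow_one (tasclP βn βd ζ ε)).symm ▸ hstep) hrest
      exact (by omega : 1 + (n+1) = n+1+1) ▸ this
    · push_neg at h
      have hb : (s : ℕ) - βd < βn*ζ+βn+1 := by omega
      have hstep : 0 < tasclP βn βd ζ ε s ⟨(s : ℕ) - βd, hb⟩ := P_pos_down hβ hε1 h rfl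
      have hrest := ih ⟨(s : ℕ) - βd, hb⟩ (by show (s : ℕ) - βd ≤ n; omega)
      have := chain hε0 hε1 ((pow_one (tasclP βn βd ζ ε)).symm ▸ hstep) hrest
      exact (by omega : 1 + (n+1) = n+1+1) ▸ this

lemma zero_loop : ∀ m, 0 < (tasclP βn βd ζ ε ^ m)
    (⟨0, Nat.succ_pos _⟩ : Fin (βn*ζ+βn+1)) ⟨0, Nat.succ_pos _⟩ := by
  intro m
  induction m with
  | zero => rw [pow_zero, Matrix.one_apply_eq]; norm_num
  | succ m ih =>
    exact chain1 hε0 hε1 ih (P_pos_zero hβ hε1 (Nat.zero_le βd) rfl)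

end

end TasclAux

/-- The TA-SCL transition matrix is primitive: some power `P^m` (with `m ≥ 1`)
has all entries strictly positive. -/
theorem tascl_primitive (βn βd ζ : ℕ) (hβd : 0 < βd) (hβ : βd < βn)
    (hcop : Nat.Coprime βn βd) (hζ : 0 < ζ) (ε : ℝ) (hε0 : 0 < ε) (hε1 : ε < 1) :
    ∃ m : ℕ, 1 ≤ m ∧
      ∀ i j : Fin (βn * ζ + βn + 1), 0 < (tasclP βn βd ζ ε ^ m) i j := by
  classical
  open TasclAux in
  have hreach : ∀ j : Fin (βn*ζ+βn+1), ∃ k, 0 <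
      (tasclP βn βd ζ ε ^ k) ⟨0, Nat.succ_pos _⟩ j := by
    intro j
    obtain ⟨h, k, hk⟩ := reach_all hβd hβ hcop hζ hε0 hε1 (j : ℕ) (by omega)
    have he : (⟨(j : ℕ), h⟩ : Fin (βn*ζ+βn+1)) = j := Fin.ext rfl
    rw [he] at hk
    exact ⟨k, hk⟩
  choose k hk using hreach
  set K := Finset.univ.sup k with hK
  have hKpos : ∀ j, 0 < (tasclP βn βd ζ ε ^ K) ⟨0, Nat.succ_pos _⟩ j := by
    intro j
    have h1 : k j ≤ K := Finset.le_sup (Finset.mem_univ j)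
    have h2 := TasclAux.chain hε0 hε1
      (TasclAux.zero_loop hβd hβ hcop hζ hε0 hε1 (K - k j)) (hk j)
    exact (by omega : K - k j + k j = K) ▸ h2
  refine ⟨(βn*ζ+βn+1) + K, by omega, fun i j => ?_⟩
  exact TasclAux.chain hε0 hε1
    (TasclAux.reach_to_zero hβd hβ hcop hζ hε0 hε1 (βn*ζ+βn) i (by omega))
    (hKpos j)
end

section
/- The TA-SCL Markov chain has a unique stationary distribution, and it is strictly positive: there exists exactly one row vector π ∈ ℝ^{S+1} with nonnegative entries summing to 1 satisfying π·P = π, and moreover every entry of this π is strictly positive. -/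
namespace TasclAux

/-- Reachability from state `0` along positive-probability transitions. -/
inductive Reach_s3 (βn βd ζ : ℕ) : ℕ → Prop
  | zero : Reach_s3 βn βd ζ 0
  | jump {s : ℕ} : Reach_s3 βn βd ζ s → s ≤ βd → Reach_s3 βn βd ζ βn
  | down {s : ℕ} : Reach_s3 βn βd ζ s → βd < s → Reach_s3 βn βd ζ (s - βd)
  | up {s : ℕ} : Reach_s3 βn βd ζ s → βd < s → s ≤ βn * ζ + βd →
      Reach_s3 βn βd ζ (s + βn - βd)

variable {βn βd ζ : ℕ}

lemma Reach_s3.le {j : ℕ} (h : Reach_s3 βn βd ζ j) : j ≤ βn * ζ + βn := by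
  induction h with
  | zero => omega
  | jump _ _ => omega
  | down _ h ih => omega
  | up _ h1 h2 ih => omega

lemma ascend (hβ : βd < βn) {w c : ℕ} (h : Reach_s3 βn βd ζ w) (h1 : βd < w)
    (h2 : w ≤ c) (h3 : c ≤ βn * ζ + βd) (hdvd : (βn - βd) ∣ (c - w)) :
    Reach_s3 βn βd ζ c := by
  obtain ⟨m, hm⟩ := hdvd
  induction m generalizing w with
  | zero => have : c = w := by omega
            exact this ▸ h
  | succ m ih =>
      rw [Nat.mul_succ] at hm
      have h4 : w ≤ βn * ζ + βd := by omega
      have h5 := Reach_s3.up h h1 h4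
      exact ih h5 (by omega) (by omega) (by omega)

lemma win_iter (hβd : 0 < βd) (hβ : βd < βn) (hζ : 0 < ζ) (k : ℕ) :
    ∃ w, Reach_s3 βn βd ζ w ∧ βd < w ∧ w ≤ βd + βn ∧
      w ≡ βn + k * (βn - βd) [MOD βn] := by
  induction k with
  | zero =>
      exact ⟨βn, Reach_s3.jump Reach_s3.zero (Nat.zero_le _), hβ, by omega,
        by simpa using Nat.ModEq.refl βn⟩
  | succ k ih =>
      obtain ⟨w, hr, h1, h2, h3⟩ := ih
      by_cases hc : 2 * βd < w
      · refine ⟨w - βd, Reach_s3.down hr (by omega), by omega, by omega, ?_⟩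
        have he : w - βd + βn = w + (βn - βd) := by omega
        calc w - βd ≡ w - βd + βn [MOD βn] := (Nat.add_modEq_right).symm
          _ = w + (βn - βd) := he
          _ ≡ βn + k * (βn - βd) + (βn - βd) [MOD βn] := h3.add_right _
          _ = βn + (k + 1) * (βn - βd) := by ring
      · have hw2 : w ≤ βn * ζ + βd := by nlinarith
        refine ⟨w + βn - βd, Reach_s3.up hr h1 hw2, by omega, by omega, ?_⟩
        have he : w + βn - βd = w + (βn - βd) := by omega
        calc w + βn - βd = w + (βn - βd) := he
          _ ≡ βn + k * (βn - βd) + (βn - βd) [MOD βn] := h3.add_right _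
          _ = βn + (k + 1) * (βn - βd) := by ring

lemma window_all (hβd : 0 < βd) (hβ : βd < βn) (hcop : Nat.Coprime βn βd)
    (hζ : 0 < ζ) {w : ℕ} (h1 : βd < w) (h2 : w ≤ βd + βn) :
    Reach_s3 βn βd ζ w := by
  haveI : NeZero βn := ⟨by omega⟩
  have hcop' : Nat.Coprime (βn - βd) βn := by
    have hc1 : Nat.Coprime (βn - βd) βd :=
      (Nat.coprime_sub_self_left hβ.le).mpr hcop
    have := (Nat.coprime_add_self_right (m := βn - βd) (n := βd)).mpr hc1
    have he : βd + (βn - βd) = βn := by omega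
    rwa [he] at this
  have hu : IsUnit ((βn - βd : ℕ) : ZMod βn) :=
    (ZMod.isUnit_iff_coprime _ _).mpr hcop'
  obtain ⟨u, hu⟩ := hu
  set k : ℕ := (((w : ZMod βn)) * ↑u⁻¹).val with hk
  have hkc : ((k : ℕ) : ZMod βn) = (w : ZMod βn) * ↑u⁻¹ := by
    simp [hk, ZMod.natCast_val, ZMod.cast_id]
  have hmod : (k * (βn - βd)) ≡ w [MOD βn] := by
    rw [← ZMod.natCast_eq_natCast_iff]
    push_cast
    rw [hkc, ← hu, mul_assoc]
    simp
  obtain ⟨w', hr, h1', h2', h3'⟩ := win_iter (ζ := ζ) hβd hβ hζ k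
  have h4 : w' ≡ w [MOD βn] := by
    calc w' ≡ βn + k * (βn - βd) [MOD βn] := h3'
      _ ≡ 0 + k * (βn - βd) [MOD βn] :=
        ((Nat.modEq_zero_iff_dvd).mpr dvd_rfl).add_right _
      _ = k * (βn - βd) := by ring
      _ ≡ w [MOD βn] := hmod
  have : w' = w := by
    rcases le_total w' w with hle | hle
    · have hd := (Nat.modEq_iff_dvd' hle).mp h4
      rcases Nat.eq_zero_or_pos (w - w') with h0 | h0
      · omega
      · exact absurd (Nat.le_of_dvd h0 hd) (by omega)
    · have hd := (Nat.modEq_iff_dvd' hle).mp h4.symm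
      rcases Nat.eq_zero_or_pos (w' - w) with h0 | h0
      · omega
      · exact absurd (Nat.le_of_dvd h0 hd) (by omega)
  exact this ▸ hr

lemma safe_all (hβd : 0 < βd) (hβ : βd < βn) (hcop : Nat.Coprime βn βd)
    (hζ : 0 < ζ) {c : ℕ} (h1 : βd < c) (h2 : c ≤ βn * ζ + βd) :
    Reach_s3 βn βd ζ c := by
  by_cases hc : c ≤ βd + βn
  · exact window_all hβd hβ hcop hζ h1 hc
  · set w : ℕ := βd + 1 + ((c - βd - 1) % (βn - βd)) with hw
    have hmlt : (c - βd - 1) % (βn - βd) < βn - βd := Nat.mod_lt _ (by omega)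
    have hr : Reach_s3 βn βd ζ w := window_all hβd hβ hcop hζ (by omega) (by omega)
    have hdvd : (βn - βd) ∣ (c - w) := by
      have := Nat.mod_add_div (c - βd - 1) (βn - βd)
      exact ⟨(c - βd - 1) / (βn - βd), by omega⟩
    exact ascend hβ hr (by omega) (by omega) h2 hdvd

lemma reach_all_s3 (hβd : 0 < βd) (hβ : βd < βn) (hcop : Nat.Coprime βn βd)
    (hζ : 0 < ζ) {j : ℕ} (hj : j ≤ βn * ζ + βn) : Reach_s3 βn βd ζ j := by
  have hnn : βn ≤ βn * ζ := Nat.le_mul_of_pos_right βn hζ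
  rcases Nat.eq_zero_or_pos j with rfl | hj1
  · exact Reach_s3.zero
  by_cases hc1 : j ≤ βd
  · have hs : Reach_s3 βn βd ζ (j + βd) :=
      safe_all hβd hβ hcop hζ (by omega) (by omega)
    have := Reach_s3.down hs (by omega)
    simpa using this
  · by_cases hc2 : j ≤ βn * ζ + βd
    · exact safe_all hβd hβ hcop hζ (by omega) hc2
    · have hs : Reach_s3 βn βd ζ (j - (βn - βd)) :=
        safe_all hβd hβ hcop hζ (by omega) (by omega)
      have := Reach_s3.up hs (by omega) (by omega)
      have he : j - (βn - βd) + βn - βd = j := by omega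
      rwa [he] at this

/-! ### Matrix lemmas -/

lemma sum_if (n a : ℕ) (ha : a < n) (x : ℝ) :
    (∑ j : Fin n, (if (j : ℕ) = a then x else 0)) = x := by
  rw [Finset.sum_eq_single (⟨a, ha⟩ : Fin n)]
  · simp
  · intro b _ hb
    rw [if_neg]
    intro h; exact hb (Fin.ext h)
  · intro h; exact absurd (Finset.mem_univ _) h

variable {ε : ℝ}

lemma entry_nonneg (hε0 : 0 ≤ ε) (hε1 : ε ≤ 1) (i j : Fin (βn * ζ + βn + 1)) :
    0 ≤ tasclP βn βd ζ ε i j := by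
  unfold tasclP
  split_ifs <;> norm_num <;> linarith

lemma rowsum (i : Fin (βn * ζ + βn + 1)) :
    (∑ j, tasclP βn βd ζ ε i j) = 1 := by
  unfold tasclP
  by_cases h1 : (i : ℕ) ≤ βd
  · simp only [h1, if_true]
    rw [Finset.sum_add_distrib, sum_if _ 0 (by omega), sum_if _ βn (by omega)]
    ring
  · by_cases h2 : (i : ℕ) ≤ βn * ζ + βd
    · simp only [h1, h2, if_false, if_true]
      rw [Finset.sum_add_distrib, sum_if _ _ (by omega), sum_if _ _ (by omega)]
      ring
    · simp only [h1, h2, if_false]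
      rw [sum_if _ _ (by omega)]

lemma entry_jump (hε1 : ε ≤ 1) {s : ℕ} (hs : s < βn * ζ + βn + 1) (h : s ≤ βd) :
    ε ≤ tasclP βn βd ζ ε ⟨s, hs⟩ ⟨βn, by omega⟩ := by
  unfold tasclP
  simp only [h, if_true]
  split_ifs <;> linarith

lemma entry_zero (hε0 : 0 ≤ ε) (hε1 : ε ≤ 1) {s : ℕ} (hs : s < βn * ζ + βn + 1)
    (h : s ≤ βd) :
    1 - ε ≤ tasclP βn βd ζ ε ⟨s, hs⟩ ⟨0, by omega⟩ := by
  unfold tasclP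
  simp only [h, if_true]
  split_ifs <;> linarith

lemma entry_down (hε0 : 0 ≤ ε) (hε1 : ε ≤ 1) {s : ℕ} (hs : s < βn * ζ + βn + 1)
    (h : βd < s) :
    1 - ε ≤ tasclP βn βd ζ ε ⟨s, hs⟩ ⟨s - βd, by omega⟩ := by
  unfold tasclP
  simp only [show ¬ (s ≤ βd) by omega, if_false]
  split_ifs <;> simp_all <;> linarith

lemma entry_up (hβ : βd < βn) (hε0 : 0 ≤ ε) (hε1 : ε ≤ 1) {s : ℕ}
    (h1 : βd < s) (h2 : s ≤ βn * ζ + βd) :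
    ε ≤ tasclP βn βd ζ ε ⟨s, by omega⟩ ⟨s + βn - βd, by omega⟩ := by
  unfold tasclP
  simp only [show ¬ (s ≤ βd) by omega, if_false, h2, if_true]
  split_ifs <;> simp_all <;> linarith

/-! ### Stationary vectors -/

section Stationary

variable {μ : Fin (βn * ζ + βn + 1) → ℝ}

lemma balance (hst : Matrix.vecMul μ (tasclP βn βd ζ ε) = μ)
    (j : Fin (βn * ζ + βn + 1)) :
    μ j = ∑ i, μ i * tasclP βn βd ζ ε i j := by
  conv_lhs => rw [← hst]
  simp [Matrix.vecMul, dotProduct]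

lemma lower (hε0 : 0 < ε) (hε1 : ε < 1) (hnn : ∀ i, 0 ≤ μ i)
    (hst : Matrix.vecMul μ (tasclP βn βd ζ ε) = μ)
    (i j : Fin (βn * ζ + βn + 1)) :
    μ i * tasclP βn βd ζ ε i j ≤ μ j := by
  rw [balance hst j]
  exact Finset.single_le_sum
    (fun k _ => mul_nonneg (hnn k) (entry_nonneg hε0.le hε1.le k j))
    (Finset.mem_univ i)

lemma prop_pos (hε0 : 0 < ε) (hε1 : ε < 1) (hnn : ∀ i, 0 ≤ μ i)
    (hst : Matrix.vecMul μ (tasclP βn βd ζ ε) = μ)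
    {i j : Fin (βn * ζ + βn + 1)} (hi : 0 < μ i)
    (hij : 0 < tasclP βn βd ζ ε i j) : 0 < μ j :=
  lt_of_lt_of_le (mul_pos hi hij) (lower hε0 hε1 hnn hst i j)

lemma exists_idle_pos (hβd : 0 < βd) (hε0 : 0 < ε) (hε1 : ε < 1)
    (hnn : ∀ i, 0 ≤ μ i) (hsum : ∑ i, μ i = 1)
    (hst : Matrix.vecMul μ (tasclP βn βd ζ ε) = μ) :
    ∃ s : ℕ, ∃ hs : s < βn * ζ + βn + 1, s ≤ βd ∧ 0 < μ ⟨s, hs⟩ := by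
  by_contra hcon
  push_neg at hcon
  have hall : ∀ s : ℕ, ∀ hs : s < βn * ζ + βn + 1, μ ⟨s, hs⟩ = 0 := by
    intro s
    induction s using Nat.strong_induction_on with
    | _ s ih =>
      intro hs
      by_cases hsb : s ≤ βd
      · exact le_antisymm (hcon s hs hsb) (hnn _)
      · have hprev : μ ⟨s - βd, by omega⟩ = 0 := ih (s - βd) (by omega) (by omega)
        have hd := entry_down (hε0.le) (hε1.le) hs (show βd < s by omega)
        have hl := lower hε0 hε1 hnn hst ⟨s, hs⟩ ⟨s - βd, by omega⟩
        rw [hprev] at hl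
        have h1 : μ ⟨s, hs⟩ * (1 - ε) ≤ μ ⟨s, hs⟩ * tasclP βn βd ζ ε ⟨s, hs⟩ ⟨s - βd, by omega⟩ :=
          mul_le_mul_of_nonneg_left hd (hnn _)
        have h2 : 0 ≤ μ ⟨s, hs⟩ := hnn _
        nlinarith
  have : (∑ i, μ i) = 0 := by
    apply Finset.sum_eq_zero
    intro i _
    have := hall i.1 i.2
    simpa using this
  rw [hsum] at this
  norm_num at this

lemma mu0_pos (hβd : 0 < βd) (hε0 : 0 < ε) (hε1 : ε < 1)
    (hnn : ∀ i, 0 ≤ μ i) (hsum : ∑ i, μ i = 1)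
    (hst : Matrix.vecMul μ (tasclP βn βd ζ ε) = μ) :
    0 < μ ⟨0, by omega⟩ := by
  obtain ⟨s, hs, hsb, hpos⟩ := exists_idle_pos hβd hε0 hε1 hnn hsum hst
  exact prop_pos hε0 hε1 hnn hst hpos
    (lt_of_lt_of_le (by linarith) (entry_zero hε0.le hε1.le hs hsb))

lemma pos_of_reach (hβd : 0 < βd) (hβ : βd < βn) (hε0 : 0 < ε) (hε1 : ε < 1)
    (hnn : ∀ i, 0 ≤ μ i) (hsum : ∑ i, μ i = 1)
    (hst : Matrix.vecMul μ (tasclP βn βd ζ ε) = μ)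
    {j : ℕ} (h : Reach_s3 βn βd ζ j) :
    ∀ hj : j < βn * ζ + βn + 1, 0 < μ ⟨j, hj⟩ := by
  induction h with
  | zero => intro hj; exact mu0_pos hβd hε0 hε1 hnn hsum hst
  | @jump s hR hle ih =>
      intro hj
      have hsn : s < βn * ζ + βn + 1 := by have := hR.le; omega
      exact prop_pos hε0 hε1 hnn hst (ih hsn)
        (lt_of_lt_of_le hε0 (entry_jump hε1.le hsn hle))
  | @down s hR hlt ih =>
      intro hj
      have hsn : s < βn * ζ + βn + 1 := by have := hR.le; omega
      exact prop_pos hε0 hε1 hnn hst (ih hsn)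
        (lt_of_lt_of_le (by linarith) (entry_down hε0.le hε1.le hsn hlt))
  | @up s hR h1 h2 ih =>
      intro hj
      have hsn : s < βn * ζ + βn + 1 := by have := hR.le; omega
      exact prop_pos hε0 hε1 hnn hst (ih hsn)
        (lt_of_lt_of_le hε0 (entry_up hβ hε0.le hε1.le h1 h2))

lemma stationary_pos (hβd : 0 < βd) (hβ : βd < βn) (hcop : Nat.Coprime βn βd)
    (hζ : 0 < ζ) (hε0 : 0 < ε) (hε1 : ε < 1)
    (hnn : ∀ i, 0 ≤ μ i) (hsum : ∑ i, μ i = 1)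
    (hst : Matrix.vecMul μ (tasclP βn βd ζ ε) = μ) :
    ∀ i, 0 < μ i := by
  intro i
  have hr : Reach_s3 βn βd ζ (i : ℕ) := reach_all_s3 hβd hβ hcop hζ (by omega)
  have := pos_of_reach hβd hβ hε0 hε1 hnn hsum hst hr i.2
  simpa using this

end Stationary

end TasclAux

/-- The TA-SCL Markov chain has a unique stationary distribution, and it is
strictly positive. -/
theorem tascl_unique_stationary (βn βd ζ : ℕ) (hβd : 0 < βd) (hβ : βd < βn)
    (hcop : Nat.Coprime βn βd) (hζ : 0 < ζ) (ε : ℝ) (hε0 : 0 < ε) (hε1 : ε < 1) :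
    ∃ π : Fin (βn * ζ + βn + 1) → ℝ,
      ((∀ i, 0 ≤ π i) ∧ (∑ i, π i = 1) ∧
        Matrix.vecMul π (tasclP βn βd ζ ε) = π) ∧
      (∀ i, 0 < π i) ∧
      (∀ π' : Fin (βn * ζ + βn + 1) → ℝ,
        (∀ i, 0 ≤ π' i) → (∑ i, π' i = 1) →
        Matrix.vecMul π' (tasclP βn βd ζ ε) = π' → π' = π) := by
  classical
  set P := tasclP βn βd ζ ε with hP
  -- `P - 1` kills the all-ones vector, so its determinant vanishes
  have hone : (P - 1).mulVec (fun _ => (1 : ℝ)) = 0 := by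
    funext i
    simp only [Matrix.mulVec, dotProduct, Matrix.sub_apply, mul_one,
      Pi.zero_apply]
    rw [Finset.sum_sub_distrib]
    rw [TasclAux.rowsum i]
    simp [Matrix.one_apply]
  have hdet : (P - 1).det = 0 := by
    rw [← Matrix.exists_mulVec_eq_zero_iff]
    refine ⟨fun _ => (1 : ℝ), ?_, hone⟩
    intro h
    have := congrFun h ⟨0, by omega⟩
    norm_num at this
  obtain ⟨w, hw0, hwP⟩ := Matrix.exists_vecMul_eq_zero_iff.mpr hdet
  have hwst : Matrix.vecMul w P = w := by
    have h := hwP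
    rw [Matrix.vecMul_sub, Matrix.vecMul_one, sub_eq_zero] at h
    exact h
  -- |w| is a nonnegative stationary vector
  set v : Fin (βn * ζ + βn + 1) → ℝ := fun i => |w i| with hv
  have hvnn : ∀ i, 0 ≤ v i := fun i => abs_nonneg _
  have hgev : ∀ j, v j ≤ Matrix.vecMul v P j := by
    intro j
    have h1 : v j = |Matrix.vecMul w P j| := by rw [hwst]
    have h2 : Matrix.vecMul w P j = ∑ i, w i * P i j := by
      simp [Matrix.vecMul, dotProduct]
    have h3 : Matrix.vecMul v P j = ∑ i, v i * P i j := by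
      simp [Matrix.vecMul, dotProduct]
    rw [h1, h2, h3]
    calc |∑ i, w i * P i j| ≤ ∑ i, |w i * P i j| :=
          Finset.abs_sum_le_sum_abs _ _
      _ = ∑ i, v i * P i j := by
          apply Finset.sum_congr rfl
          intro i _
          rw [abs_mul, abs_of_nonneg (TasclAux.entry_nonneg hε0.le hε1.le i j)]
  have hsums : (∑ j, Matrix.vecMul v P j) = ∑ j, v j := by
    have : ∀ j, Matrix.vecMul v P j = ∑ i, v i * P i j := by
      intro j; simp [Matrix.vecMul, dotProduct]
    simp_rw [this]
    rw [Finset.sum_comm]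
    apply Finset.sum_congr rfl
    intro i _
    rw [← Finset.mul_sum, TasclAux.rowsum i, mul_one]
  have hvst : Matrix.vecMul v P = v := by
    funext j
    have hz : (∑ j, (Matrix.vecMul v P j - v j)) = 0 := by
      rw [Finset.sum_sub_distrib, hsums, sub_self]
    have hnn' : ∀ j ∈ Finset.univ, 0 ≤ Matrix.vecMul v P j - v j :=
      fun j _ => by linarith [hgev j]
    have := (Finset.sum_eq_zero_iff_of_nonneg hnn').mp hz j (Finset.mem_univ j)
    linarith
  have htpos : 0 < ∑ i, v i := by
    obtain ⟨i, hi⟩ := Function.ne_iff.mp hw0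
    apply Finset.sum_pos'
    · exact fun i _ => hvnn i
    · exact ⟨i, Finset.mem_univ i, abs_pos.mpr hi⟩
  set t : ℝ := ∑ i, v i with ht
  refine ⟨t⁻¹ • v, ⟨?_, ?_, ?_⟩, ?_, ?_⟩
  · intro i
    exact mul_nonneg (inv_nonneg.mpr htpos.le) (hvnn i)
  · simp only [Pi.smul_apply, smul_eq_mul]
    rw [← Finset.mul_sum, ← ht, inv_mul_cancel₀ htpos.ne']
  · rw [Matrix.smul_vecMul, hvst]
  · -- strict positivity
    exact TasclAux.stationary_pos hβd hβ hcop hζ hε0 hε1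
      (fun i => mul_nonneg (inv_nonneg.mpr htpos.le) (hvnn i))
      (by simp only [Pi.smul_apply, smul_eq_mul]
          rw [← Finset.mul_sum, ← ht, inv_mul_cancel₀ htpos.ne'])
      (by rw [Matrix.smul_vecMul, hvst])
  · -- uniqueness
    intro π' hnn' hsum' hst'
    set π : Fin (βn * ζ + βn + 1) → ℝ := t⁻¹ • v with hπ
    have hπnn : ∀ i, 0 ≤ π i :=
      fun i => mul_nonneg (inv_nonneg.mpr htpos.le) (hvnn i)
    have hπsum : ∑ i, π i = 1 := by
      simp only [hπ, Pi.smul_apply, smul_eq_mul]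
      rw [← Finset.mul_sum, ← ht, inv_mul_cancel₀ htpos.ne']
    have hπst : Matrix.vecMul π P = π := by rw [hπ, Matrix.smul_vecMul, hvst]
    have hπpos : ∀ i, 0 < π i :=
      TasclAux.stationary_pos hβd hβ hcop hζ hε0 hε1 hπnn hπsum hπst
    have hπ'pos : ∀ i, 0 < π' i :=
      TasclAux.stationary_pos hβd hβ hcop hζ hε0 hε1 hnn' hsum' hst'
    set c : ℝ := Finset.univ.inf' Finset.univ_nonempty (fun i => π' i / π i)
      with hc
    obtain ⟨i₀, _, hi₀⟩ :=
      Finset.exists_mem_eq_inf' (Finset.univ_nonempty) (fun i => π' i / π i)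
    have hcle : ∀ i, c ≤ π' i / π i := fun i => Finset.inf'_le _ (Finset.mem_univ i)
    have hμnn : ∀ i, 0 ≤ π' i - c * π i := by
      intro i
      have h1 := (le_div_iff₀ (hπpos i)).mp (hcle i)
      linarith
    have hμ0 : π' i₀ - c * π i₀ = 0 := by
      rw [← hc] at hi₀
      rw [hi₀, div_mul_cancel₀ _ (hπpos i₀).ne', sub_self]
    have hμsum : (∑ i, (π' i - c * π i)) = 1 - c := by
      rw [Finset.sum_sub_distrib, hsum', ← Finset.mul_sum, hπsum, mul_one]
    have hμst : Matrix.vecMul (fun i => π' i - c * π i) P =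
        (fun i => π' i - c * π i) := by
      have : (fun i => π' i - c * π i) = π' - c • π := by
        funext i; simp [Pi.sub_apply, Pi.smul_apply, smul_eq_mul]
      rw [this, Matrix.sub_vecMul, Matrix.smul_vecMul, hst', hπst]
    rcases lt_or_ge c 1 with hclt | hcge
    · -- normalize and contradict positivity
      exfalso
      have h1c : (0 : ℝ) < 1 - c := by linarith
      set ν : Fin (βn * ζ + βn + 1) → ℝ :=
        (1 - c)⁻¹ • (fun i => π' i - c * π i) with hν
      have hνnn : ∀ i, 0 ≤ ν i :=
        fun i => mul_nonneg (inv_nonneg.mpr h1c.le) (hμnn i)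
      have hνsum : ∑ i, ν i = 1 := by
        simp only [hν, Pi.smul_apply, smul_eq_mul]
        rw [← Finset.mul_sum, hμsum, inv_mul_cancel₀ h1c.ne']
      have hνst : Matrix.vecMul ν P = ν := by
        rw [hν, Matrix.smul_vecMul, hμst]
      have := TasclAux.stationary_pos hβd hβ hcop hζ hε0 hε1 hνnn hνsum hνst i₀
      rw [hν] at this
      simp only [Pi.smul_apply, smul_eq_mul] at this
      rw [hμ0, mul_zero] at this
      exact lt_irrefl _ this
    · -- c ≥ 1 forces c = 1 and μ = 0
      have hsumnn : 0 ≤ 1 - c := by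
        rw [← hμsum]
        exact Finset.sum_nonneg (fun i _ => hμnn i)
      have hc1 : c = 1 := by linarith
      have hz : (∑ i, (π' i - c * π i)) = 0 := by rw [hμsum, hc1, sub_self]
      have hall := (Finset.sum_eq_zero_iff_of_nonneg
        (fun i _ => hμnn i)).mp hz
      funext i
      have := hall i (Finset.mem_univ i)
      rw [hc1] at this
      linarith
end

section
/- The TA-SCL Markov chain converges to its stationary distribution regardless of the initial distribution: the matrix powers P^k converge entrywise as k → ∞ to a limit matrix P_∞ all of whose rows are equal to the unique stationary distribution π of P; consequently, for every row vector λ ∈ ℝ^{S+1} with nonnegative entries summing to 1, the vectors λ·P^k converge entrywise to π as k → ∞. -/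
/-!
Doeblin's argument. If a row-stochastic `A` has a power `A ^ m` whose column `c` is bounded
below by `δ > 0`, then `A ^ m` contracts the `ℓ¹` norm of zero-sum vectors by the factor
`1 - δ` (Dobrushin), while `A` never expands it; hence `v ᵥ* A ^ k → 0` whenever `∑ v = 0`.
A limit point of an orbit in the compact simplex is then stationary, and
`l ᵥ* A ^ k - π = (l - π) ᵥ* A ^ k → 0` gives convergence and uniqueness.
For the TA-SCL chain every state moves down by `βd` with probability at least `1 - ε`, so any
state reaches `0` in `S + 1` steps with probability at least `(1 - ε) ^ (S + 1)`.
-/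

open Finset Filter Topology Matrix

namespace Matrix

variable {ι : Type*} [Fintype ι] {A : Matrix ι ι ℝ}

lemma norm_le_sum_abs (v : ι → ℝ) : ‖v‖ ≤ ∑ i, |v i| :=
  (pi_norm_le_iff_of_nonneg (by positivity)).2 fun j =>
    (Real.norm_eq_abs _).trans_le (single_le_sum (fun i _ => abs_nonneg (v i)) (mem_univ j))

lemma sum_abs_vecMul_le {c : ℝ} (h0 : ∀ i j, 0 ≤ A i j) (hc : ∀ i, ∑ j, A i j ≤ c)
    (v : ι → ℝ) : ∑ j, |(v ᵥ* A) j| ≤ c * ∑ i, |v i| :=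
  calc ∑ j, |(v ᵥ* A) j| ≤ ∑ j, ∑ i, |v i| * A i j := sum_le_sum fun j _ =>
        (abs_sum_le_sum_abs _ _).trans_eq (by simp [abs_mul, abs_of_nonneg (h0 _ j)])
    _ = ∑ i, |v i| * ∑ j, A i j := by rw [sum_comm]; simp only [mul_sum]
    _ ≤ ∑ i, |v i| * c := sum_le_sum fun i _ => mul_le_mul_of_nonneg_left (hc i) (abs_nonneg _)
    _ = c * ∑ i, |v i| := by rw [← sum_mul, mul_comm]

variable [DecidableEq ι]

lemma sum_vecMul_of_mem_rowStochastic (hA : A ∈ rowStochastic ℝ ι) (v : ι → ℝ) :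
    ∑ j, (v ᵥ* A) j = ∑ i, v i := by
  rw [← dotProduct_one, ← dotProduct_one, ← dotProduct_mulVec,
    one_vecMul_of_mem_rowStochastic hA]

lemma sum_abs_vecMul_le_of_mem_rowStochastic (hA : A ∈ rowStochastic ℝ ι) (v : ι → ℝ) :
    ∑ j, |(v ᵥ* A) j| ≤ ∑ i, |v i| := by
  simpa using sum_abs_vecMul_le (fun _ _ => nonneg_of_mem_rowStochastic hA)
    (fun i => (sum_row_of_mem_rowStochastic hA i).le) v

/-- Dobrushin's contraction: removing the common mass `δ` from column `c` does not change
`v ᵥ* A` when `∑ v = 0`, and leaves a nonnegative matrix with row sums `1 - δ`. -/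
lemma sum_abs_vecMul_le_of_le_col (hA : A ∈ rowStochastic ℝ ι) {δ : ℝ} {c : ι}
    (hcol : ∀ i, δ ≤ A i c) {v : ι → ℝ} (hv : ∑ i, v i = 0) :
    ∑ j, |(v ᵥ* A) j| ≤ (1 - δ) * ∑ i, |v i| := by
  set R := A - vecMulVec 1 (Pi.single c δ)
  have hR : v ᵥ* A = v ᵥ* R := by
    rw [vecMul_sub, vecMul_vecMulVec, dotProduct_one, hv, zero_smul, sub_zero]
  have hR0 : ∀ i j, 0 ≤ R i j := by
    intro i j
    by_cases hj : j = c
    · subst hj; simpa [R, vecMulVec] using hcol i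
    · simpa [R, vecMulVec, hj] using nonneg_of_mem_rowStochastic hA
  have hR1 : ∀ i, ∑ j, R i j = 1 - δ := by
    intro i
    simp [R, vecMulVec, sum_sub_distrib, sum_row_of_mem_rowStochastic hA]
  rw [hR]
  exact sum_abs_vecMul_le hR0 (fun i => (hR1 i).le) v

lemma sum_abs_vecMul_pow_le_of_le_col (hA : A ∈ rowStochastic ℝ ι) {δ : ℝ} {c : ι}
    (hcol : ∀ i, δ ≤ A i c) (q : ℕ) {v : ι → ℝ} (hv : ∑ i, v i = 0) :
    ∑ j, |(v ᵥ* A ^ q) j| ≤ (1 - δ) ^ q * ∑ i, |v i| := by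
  induction q generalizing v with
  | zero => simp
  | succ q ih =>
    rw [pow_succ', ← vecMul_vecMul, pow_succ, mul_assoc]
    have hvA : ∑ i, (v ᵥ* A) i = 0 := by rw [sum_vecMul_of_mem_rowStochastic hA, hv]
    have hδ : δ ≤ 1 := (hcol c).trans (le_one_of_mem_rowStochastic hA)
    exact (ih hvA).trans (mul_le_mul_of_nonneg_left (sum_abs_vecMul_le_of_le_col hA hcol hv)
      (pow_nonneg (sub_nonneg.2 hδ) q))

lemma sum_abs_vecMul_pow_le (hA : A ∈ rowStochastic ℝ ι) {m : ℕ} {δ : ℝ} {c : ι}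
    (hcol : ∀ i, δ ≤ (A ^ m) i c) (k : ℕ) {v : ι → ℝ} (hv : ∑ i, v i = 0) :
    ∑ j, |(v ᵥ* A ^ k) j| ≤ (1 - δ) ^ (k / m) * ∑ i, |v i| := by
  rw [← Nat.div_add_mod k m, pow_add, pow_mul, ← vecMul_vecMul, Nat.div_add_mod]
  exact (sum_abs_vecMul_le_of_mem_rowStochastic (pow_mem hA _) _).trans
    (sum_abs_vecMul_pow_le_of_le_col (pow_mem hA m) hcol _ hv)

lemma tendsto_vecMul_pow_of_sum_eq_zero (hA : A ∈ rowStochastic ℝ ι) {m : ℕ} (hm : m ≠ 0)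
    {δ : ℝ} (hδ : 0 < δ) {c : ι} (hcol : ∀ i, δ ≤ (A ^ m) i c) {v : ι → ℝ}
    (hv : ∑ i, v i = 0) : Tendsto (fun k => v ᵥ* A ^ k) atTop (𝓝 0) := by
  have hδ1 : δ ≤ 1 := (hcol c).trans (le_one_of_mem_rowStochastic (pow_mem hA m))
  have hrate : Tendsto (fun k => (1 - δ) ^ (k / m)) atTop (𝓝 0) :=
    (tendsto_pow_atTop_nhds_zero_of_lt_one (by linarith) (by linarith)).comp
      (Nat.tendsto_div_const_atTop hm)
  refine squeeze_zero_norm (fun k => (norm_le_sum_abs _).trans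
    (sum_abs_vecMul_pow_le hA hcol k hv)) ?_
  simpa using hrate.mul_const (∑ i, |v i|)

lemma vecMul_mem_stdSimplex (hA : A ∈ rowStochastic ℝ ι) {p : ι → ℝ}
    (hp : p ∈ stdSimplex ℝ ι) : p ᵥ* A ∈ stdSimplex ℝ ι :=
  ⟨nonneg_vecMul_of_mem_rowStochastic hA hp.1, (sum_vecMul_of_mem_rowStochastic hA p).trans hp.2⟩

/-- A limit point `π` of the orbit `p k = e_c A ^ k` is stationary, because
`p (k + 1) - p k = (p 1 - p 0) ᵥ* A ^ k` tends to zero. -/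
lemma exists_stationary_of_tendsto_zero [Nonempty ι] (hA : A ∈ rowStochastic ℝ ι)
    (hmix : ∀ v : ι → ℝ, ∑ i, v i = 0 → Tendsto (fun k => v ᵥ* A ^ k) atTop (𝓝 0)) :
    ∃ π ∈ stdSimplex ℝ ι, π ᵥ* A = π := by
  obtain ⟨c⟩ := ‹Nonempty ι›
  set p : ℕ → ι → ℝ := fun k => Pi.single c 1 ᵥ* A ^ k
  have hp_succ : ∀ k, p (k + 1) = p k ᵥ* A := fun k => by
    simp only [p, pow_succ, vecMul_vecMul]
  have hp : ∀ k, p k ∈ stdSimplex ℝ ι := fun k => by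
    induction k with
    | zero => simpa only [p, pow_zero, vecMul_one] using single_mem_stdSimplex ℝ c
    | succ k ih => rw [hp_succ]; exact vecMul_mem_stdSimplex hA ih
  have hshift : ∀ j k, p j ᵥ* A ^ k = p (k + j) := fun j k => by
    simp only [p, vecMul_vecMul, ← pow_add, add_comm]
  have hdiff : ∀ k, (p 1 - p 0) ᵥ* A ^ k = p k ᵥ* A - p k := fun k => by
    rw [sub_vecMul, hshift, hshift, hp_succ, add_zero]
  obtain ⟨π, hπ, φ, hφ, hlim⟩ := (isCompact_stdSimplex ℝ ι).tendsto_subseq hp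
  have hsum : ∑ i, (p 1 - p 0) i = 0 := by simp [sum_sub_distrib, (hp 1).2, (hp 0).2]
  have hstep := (hmix _ hsum).comp hφ.tendsto_atTop
  have hcont : Tendsto (fun k => p (φ k) ᵥ* A) atTop (𝓝 (π ᵥ* A)) :=
    ((continuous_id.matrix_vecMul continuous_const).tendsto π).comp hlim
  refine ⟨π, hπ, tendsto_nhds_unique ?_ hlim⟩
  simpa [Function.comp_def, hdiff] using hcont.sub hstep

lemma vecMul_pow_eq_self {π : ι → ℝ} (hπ : π ᵥ* A = π) (k : ℕ) : π ᵥ* A ^ k = π := by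
  induction k with
  | zero => simp
  | succ k ih => rw [pow_succ, ← vecMul_vecMul, ih, hπ]

lemma tendsto_vecMul_pow_of_stationary
    (hmix : ∀ v : ι → ℝ, ∑ i, v i = 0 → Tendsto (fun k => v ᵥ* A ^ k) atTop (𝓝 0))
    {π : ι → ℝ} (hπ1 : ∑ i, π i = 1) (hπ : π ᵥ* A = π) {l : ι → ℝ} (hl : ∑ i, l i = 1) :
    Tendsto (fun k => l ᵥ* A ^ k) atTop (𝓝 π) := by
  have hlπ : ∑ i, (l - π) i = 0 := by simp [sum_sub_distrib, hl, hπ1]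
  simpa [sub_vecMul, vecMul_pow_eq_self hπ] using (hmix _ hlπ).add_const π

lemma le_pow_apply_iterate (h0 : ∀ i j, 0 ≤ A i j) {a : ℝ} (ha : 0 ≤ a) {g : ι → ι}
    (hg : ∀ i, a ≤ A i (g i)) (k : ℕ) (i : ι) : a ^ k ≤ (A ^ k) i (g^[k] i) := by
  induction k generalizing i with
  | zero => simp
  | succ k ih =>
    rw [pow_succ', pow_succ', mul_apply, Function.iterate_succ_apply]
    calc a * a ^ k ≤ A i (g i) * (A ^ k) (g i) (g^[k] (g i)) :=
          mul_le_mul (hg i) (ih (g i)) (pow_nonneg ha k) (ha.trans (hg i))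
      _ ≤ _ := single_le_sum (f := fun l => A i l * (A ^ k) l (g^[k] (g i)))
          (fun l _ => mul_nonneg (h0 i l) (pow_apply_nonneg h0 k l _)) (mem_univ (g i))

end Matrix

lemma Fin.sum_ite_val_eq {n : ℕ} (a : ℕ) (ha : a < n) (x : ℝ) :
    ∑ j : Fin n, (if (j : ℕ) = a then x else 0) = x := by
  simpa [Fin.ext_iff] using sum_ite_eq' univ (⟨a, ha⟩ : Fin n) fun _ => x

section TASCL

variable {βn βd ζ : ℕ} {ε : ℝ}

lemma tasclP_mem_rowStochastic (hε0 : 0 ≤ ε) (hε1 : ε ≤ 1) :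
    tasclP βn βd ζ ε ∈ rowStochastic ℝ (Fin (βn * ζ + βn + 1)) := by
  refine mem_rowStochastic_iff_sum.2 ⟨fun s j => ?_, fun s => ?_⟩
  · unfold tasclP
    split_ifs <;> linarith
  · have hs := s.isLt
    unfold tasclP
    split_ifs
    · rw [sum_add_distrib, Fin.sum_ite_val_eq 0 (by omega), Fin.sum_ite_val_eq βn (by omega)]
      ring
    · rw [sum_add_distrib, Fin.sum_ite_val_eq (s - βd) (by omega),
        Fin.sum_ite_val_eq (s + βn - βd) (by omega)]
      ring
    · exact Fin.sum_ite_val_eq (s - βd) (by omega) 1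

/-- From an idle state `s - βd` truncates to `0`. -/
lemma one_sub_le_tasclP_sub (hε0 : 0 ≤ ε) (s : Fin (βn * ζ + βn + 1)) :
    1 - ε ≤ tasclP βn βd ζ ε s ⟨s - βd, by omega⟩ := by
  dsimp only [tasclP]
  split_ifs <;> first | linarith | omega

lemma tasclP_pow_apply_zero_ge (hβd : 0 < βd) (hε0 : 0 ≤ ε) (hε1 : ε ≤ 1)
    (s : Fin (βn * ζ + βn + 1)) :
    (1 - ε) ^ (βn * ζ + βn + 1) ≤ (tasclP βn βd ζ ε ^ (βn * ζ + βn + 1)) s 0 := by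
  set g : Fin (βn * ζ + βn + 1) → Fin (βn * ζ + βn + 1) := fun s => ⟨s - βd, by omega⟩
  have hg : ∀ k s, (g^[k] s : ℕ) = s - k * βd := by
    intro k
    induction k with
    | zero => simp
    | succ k ih =>
      intro s
      rw [Function.iterate_succ, Function.comp_apply, ih]
      simp only [g]
      grind
  have hg0 : g^[βn * ζ + βn + 1] s = 0 := by
    have := Nat.le_mul_of_pos_right (βn * ζ + βn + 1) hβd
    exact Fin.ext (by rw [hg, Fin.val_zero]; omega)
  rw [← hg0]
  exact le_pow_apply_iterate (mem_rowStochastic_iff_sum.1 (tasclP_mem_rowStochastic hε0 hε1)).1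
    (sub_nonneg.2 hε1) (one_sub_le_tasclP_sub hε0) _ s

end TASCL

theorem tascl_convergence_general (βn βd ζ : ℕ) (hβd : 0 < βd) (ε : ℝ) (hε0 : 0 < ε) (hε1 : ε < 1) :
    ∃ π : Fin (βn * ζ + βn + 1) → ℝ,
      ((∀ i, 0 ≤ π i) ∧ (∑ i, π i = 1) ∧
        Matrix.vecMul π (tasclP βn βd ζ ε) = π) ∧
      (∀ π' : Fin (βn * ζ + βn + 1) → ℝ,
        (∀ i, 0 ≤ π' i) → (∑ i, π' i = 1) →
        Matrix.vecMul π' (tasclP βn βd ζ ε) = π' → π' = π) ∧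
      (∀ i j : Fin (βn * ζ + βn + 1),
        Filter.Tendsto (fun k : ℕ => (tasclP βn βd ζ ε ^ k) i j)
          Filter.atTop (nhds (π j))) ∧
      (∀ l : Fin (βn * ζ + βn + 1) → ℝ,
        (∀ i, 0 ≤ l i) → (∑ i, l i = 1) →
        ∀ j : Fin (βn * ζ + βn + 1),
          Filter.Tendsto (fun k : ℕ => Matrix.vecMul l (tasclP βn βd ζ ε ^ k) j)
            Filter.atTop (nhds (π j))) := by
  have hP := tasclP_mem_rowStochastic (βn := βn) (βd := βd) (ζ := ζ) hε0.le hε1.le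
  have hmix : ∀ v, ∑ i, v i = 0 → Tendsto (fun k => v ᵥ* tasclP βn βd ζ ε ^ k) atTop (𝓝 0) :=
    fun v => tendsto_vecMul_pow_of_sum_eq_zero hP (Nat.succ_ne_zero _)
      (pow_pos (sub_pos.2 hε1) _) (tasclP_pow_apply_zero_ge hβd hε0.le hε1.le)
  obtain ⟨π, ⟨hπ0, hπ1⟩, hπ⟩ := exists_stationary_of_tendsto_zero hP hmix
  have hlim : ∀ l, ∑ i, l i = 1 → Tendsto (fun k => l ᵥ* tasclP βn βd ζ ε ^ k) atTop (𝓝 π) :=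
    fun _ => tendsto_vecMul_pow_of_stationary hmix hπ1 hπ
  refine ⟨π, ⟨hπ0, hπ1, hπ⟩, fun π' _ hπ'1 hπ' => ?_, fun i j => ?_,
    fun l _ hl => tendsto_pi_nhds.1 (hlim l hl)⟩
  · refine tendsto_nhds_unique ?_ (hlim π' hπ'1)
    simp only [vecMul_pow_eq_self hπ', tendsto_const_nhds]
  · simpa using tendsto_pi_nhds.1 (hlim (Pi.single i 1) (by simp)) j

/-- The TA-SCL Markov chain converges to its (unique) stationary distribution
regardless of the initial distribution: `P^k` converges entrywise to a matrix
all of whose rows equal `π`, and `λ ⬝ P^k → π` for every initial distribution `λ`. -/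
theorem tascl_convergence (βn βd ζ : ℕ) (hβd : 0 < βd) (hβ : βd < βn)
    (hcop : Nat.Coprime βn βd) (hζ : 0 < ζ) (ε : ℝ) (hε0 : 0 < ε) (hε1 : ε < 1) :
    ∃ π : Fin (βn * ζ + βn + 1) → ℝ,
      ((∀ i, 0 ≤ π i) ∧ (∑ i, π i = 1) ∧
        Matrix.vecMul π (tasclP βn βd ζ ε) = π) ∧
      (∀ π' : Fin (βn * ζ + βn + 1) → ℝ,
        (∀ i, 0 ≤ π' i) → (∑ i, π' i = 1) →
        Matrix.vecMul π' (tasclP βn βd ζ ε) = π' → π' = π) ∧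
      (∀ i j : Fin (βn * ζ + βn + 1),
        Filter.Tendsto (fun k : ℕ => (tasclP βn βd ζ ε ^ k) i j)
          Filter.atTop (nhds (π j))) ∧
      (∀ l : Fin (βn * ζ + βn + 1) → ℝ,
        (∀ i, 0 ≤ l i) → (∑ i, l i = 1) →
        ∀ j : Fin (βn * ζ + βn + 1),
          Filter.Tendsto (fun k : ℕ => Matrix.vecMul l (tasclP βn βd ζ ε ^ k) j)
            Filter.atTop (nhds (π j))) :=
  tascl_convergence_general βn βd ζ hβd ε hε0 hε1
end
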